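/- arXiv:1910.06533 — 2 statements merged into one kernel-verified Lean document; each statement's English description precedes it below -/
import Mathlib

section
/- The ruled strip f(t,v) = c(t) + v ξ(t) is developable (i.e. det(c'(t), ξ(t), ξ'(t)) = 0 for all t ∈ I) if and only if the angular functions satisfy κ(t) sin α(t) cos β(t) = (α'(t) + τ(t)) sin β(t) for all t ∈ I (equivalently, cot β(t) = (α'(t) + τ(t)) / (κ(t) sin α(t)), since sin β(t) > 0). -/
noncomputable section
open Real Set
open scoped ContDiff

local notation "⟪" x ", " y "⟫" => @inner ℝ _ _ x y

abbrev E3 := EuclideanSpace ℝ (Fin 3)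

def cross3 (u v : E3) : E3 :=
  (WithLp.equiv 2 (Fin 3 → ℝ)).symm
    ![u 1 * v 2 - u 2 * v 1, u 2 * v 0 - u 0 * v 2, u 0 * v 1 - u 1 * v 0]

/-!
Write `B = e × n`. For a unit `e` orthogonal to `n`, `e × ξ = sin β (cos α B - sin α n)`,
so `det(c', ξ, ξ') = ⟪e × ξ, ξ'⟫` only involves the `n`- and `B`-components of `ξ'`.
Using `e' = κ n`, `n ⟂ n'` (as `|n| = 1`) and `B' = e × n'`, these are
`⟪n, ξ'⟫ = κ cos β + β' cos β cos α - (α' + τ) sin β sin α` and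
`⟪B, ξ'⟫ = β' cos β sin α + (α' + τ) sin β cos α`, whence
`det(c', ξ, ξ') = sin β ((α' + τ) sin β - κ sin α cos β)`, and `sin β > 0`.
-/

lemma cross3_eq_crossProduct (u v : E3) :
    cross3 u v = WithLp.toLp 2 (crossProduct u.ofLp v.ofLp) := by
  ext i; fin_cases i <;> simp [cross3, cross_apply]

lemma real_inner_eq_dotProduct (u v : E3) : ⟪u, v⟫ = u.ofLp ⬝ᵥ v.ofLp := by
  simp [EuclideanSpace.inner_eq_star_dotProduct, dotProduct_comm]

section Cross3

variable (u v w x : E3)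

@[simp] lemma cross3_self : cross3 u u = 0 := by simp [cross3_eq_crossProduct]

@[simp] lemma cross3_smul_left (r : ℝ) : cross3 (r • u) v = r • cross3 u v := by
  simp [cross3_eq_crossProduct]

@[simp] lemma cross3_smul_right (r : ℝ) : cross3 u (r • v) = r • cross3 u v := by
  simp [cross3_eq_crossProduct]

@[simp] lemma cross3_add_left : cross3 (u + v) w = cross3 u w + cross3 v w := by
  simp [cross3_eq_crossProduct]

@[simp] lemma cross3_add_right : cross3 u (v + w) = cross3 u v + cross3 u w := by
  simp [cross3_eq_crossProduct]

@[simp] lemma inner_self_cross3 : ⟪u, cross3 u v⟫ = 0 := by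
  simp [cross3_eq_crossProduct, real_inner_eq_dotProduct]

@[simp] lemma inner_cross3_self : ⟪v, cross3 u v⟫ = 0 := by
  simp [cross3_eq_crossProduct, real_inner_eq_dotProduct]

@[simp] lemma inner_cross3_left_left : ⟪cross3 u v, u⟫ = 0 := by
  rw [real_inner_comm]; simp

@[simp] lemma inner_cross3_left_right : ⟪cross3 u v, v⟫ = 0 := by
  rw [real_inner_comm]; simp

lemma inner_cross3_swap : ⟪u, cross3 v w⟫ = -⟪w, cross3 v u⟫ := by
  simp only [cross3_eq_crossProduct, real_inner_eq_dotProduct]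
  rw [← cross_anticomm u.ofLp, dotProduct_neg, neg_neg, triple_product_permutation,
    triple_product_permutation]

lemma cross3_cross3 : cross3 u (cross3 v w) = ⟪u, w⟫ • v - ⟪u, v⟫ • w := by
  simp [cross3_eq_crossProduct, real_inner_eq_dotProduct, cross_cross_eq_smul_sub_smul',
    dotProduct_comm]

lemma inner_cross3_cross3 :
    ⟪cross3 u v, cross3 w x⟫ = ⟪u, w⟫ * ⟪v, x⟫ - ⟪u, x⟫ * ⟪v, w⟫ := by
  simp [cross3_eq_crossProduct, real_inner_eq_dotProduct, cross_dot_cross]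

lemma norm_cross3_sq : ‖cross3 u v‖ ^ 2 = ‖u‖ ^ 2 * ‖v‖ ^ 2 - ⟪u, v⟫ ^ 2 := by
  rw [← real_inner_self_eq_norm_sq, inner_cross3_cross3, real_inner_comm v u]; simp; ring

end Cross3

def cross3CLM : E3 →L[ℝ] E3 →L[ℝ] E3 :=
  LinearMap.toContinuousLinearMap (LinearMap.toContinuousLinearMap.toLinearMap ∘ₗ
    LinearMap.mk₂ ℝ cross3 cross3_add_left (fun r u v => cross3_smul_left u v r)
      cross3_add_right (fun r u v => cross3_smul_right u v r))

lemma hasDerivAt_cross3 {f g : ℝ → E3} {f' g' : E3} {t : ℝ}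
    (hf : HasDerivAt f f' t) (hg : HasDerivAt g g' t) :
    HasDerivAt (fun s => cross3 (f s) (g s)) (cross3 f' (g t) + cross3 (f t) g') t := by
  simpa [cross3CLM, add_comm] using
    cross3CLM.hasDerivAt_of_bilinear (fun _ => hf) (fun _ => hg)

def ruling (α β : ℝ) (E N : E3) : E3 :=
  cos β • E + sin β • (cos α • N + sin α • cross3 E N)

lemma hasDerivAt_ruling {α β : ℝ → ℝ} {e n : ℝ → E3} {α' β' t : ℝ} {e' n' : E3}
    (hα : HasDerivAt α α' t) (hβ : HasDerivAt β β' t)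
    (he : HasDerivAt e e' t) (hn : HasDerivAt n n' t) :
    HasDerivAt (fun s => ruling (α s) (β s) (e s) (n s))
      (cos (β t) • e' + (-sin (β t) * β') • e t +
        (sin (β t) • (cos (α t) • n' + (-sin (α t) * α') • n t +
            (sin (α t) • (cross3 e' (n t) + cross3 (e t) n') +
              (cos (α t) * α') • cross3 (e t) (n t))) +
          (cos (β t) * β') • (cos (α t) • n t + sin (α t) • cross3 (e t) (n t)))) t :=
  (hβ.cos.smul he).add <| hβ.sin.smul <|
    (hα.cos.smul hn).add <| hα.sin.smul <| hasDerivAt_cross3 he hn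

lemma cross3_ruling {E N : E3} (hE : ‖E‖ = 1) (hEN : ⟪E, N⟫ = 0) (α β : ℝ) :
    cross3 E (ruling α β E N) = sin β • (cos α • cross3 E N - sin α • N) := by
  simp [ruling, cross3_cross3, hE, hEN, sub_eq_add_neg]

lemma inner_cross3_ruling_deriv {α β : ℝ → ℝ} {e n : ℝ → E3} {t κ : ℝ} {n' : E3}
    (hα : DifferentiableAt ℝ α t) (hβ : DifferentiableAt ℝ β t)
    (he : HasDerivAt e (κ • n t) t) (hn : HasDerivAt n n' t)
    (hE : ‖e t‖ = 1) (hEN : ⟪e t, n t⟫ = 0) (hN : ‖n t‖ = 1) (hNN' : ⟪n t, n'⟫ = 0) :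
    ⟪cross3 (e t) (ruling (α t) (β t) (e t) (n t)),
        deriv (fun s => ruling (α s) (β s) (e s) (n s)) t⟫ =
      sin (β t) * ((deriv α t + ⟪n', cross3 (e t) (n t)⟫) * sin (β t) -
        κ * sin (α t) * cos (β t)) := by
  rw [(hasDerivAt_ruling hα.hasDerivAt hβ.hasDerivAt he hn).deriv, cross3_ruling hE hEN]
  set V := cos (β t) • (κ • n t) + (-sin (β t) * deriv β t) • e t +
    (sin (β t) • (cos (α t) • n' + (-sin (α t) * deriv α t) • n t +
        (sin (α t) • (cross3 (κ • n t) (n t) + cross3 (e t) n') +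
          (cos (α t) * deriv α t) • cross3 (e t) (n t))) +
      (cos (β t) * deriv β t) • (cos (α t) • n t + sin (α t) • cross3 (e t) (n t)))
  set τ := ⟪n', cross3 (e t) (n t)⟫
  have hNE : ⟪n t, e t⟫ = 0 := by rw [real_inner_comm, hEN]
  have hB : ‖cross3 (e t) (n t)‖ ^ 2 = 1 := by rw [norm_cross3_sq, hE, hN, hEN]; norm_num
  have hN_V : ⟪n t, V⟫ = κ * cos (β t) + deriv β t * cos (β t) * cos (α t) -
      (deriv α t + τ) * sin (β t) * sin (α t) := by
    simp [V, τ, inner_add_right, inner_smul_right, hN, hNE, hNN',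
      inner_cross3_swap (n t) (e t) n']
    ring
  have hB_V : ⟪cross3 (e t) (n t), V⟫ = deriv β t * cos (β t) * sin (α t) +
      (deriv α t + τ) * sin (β t) * cos (α t) := by
    simp [V, τ, inner_add_right, inner_smul_right, hB, inner_cross3_cross3, hE, hNE, hNN',
      real_inner_comm n']
    ring
  simp only [inner_smul_left, inner_sub_left, hN_V, hB_V, conj_trivial]
  linear_combination (sin (β t) ^ 2 * (deriv α t + τ)) * sin_sq_add_cos_sq (α t)

lemma HasDerivWithinAt.inner_eq_zero_of_norm_eqOn {F : Type*} [NormedAddCommGroup F]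
    [InnerProductSpace ℝ F] {f : ℝ → F} {f' : F} {s : Set ℝ} {t r : ℝ}
    (hf : HasDerivWithinAt f f' s t) (hs : UniqueDiffWithinAt ℝ s t) (ht : t ∈ s)
    (hr : ∀ x ∈ s, ‖f x‖ = r) : ⟪f t, f'⟫ = 0 := by
  have hconst : HasDerivWithinAt (fun x => ⟪f x, f x⟫) 0 s t :=
    (hasDerivWithinAt_const t s (r ^ 2)).congr (fun x hx => by simp [hr x hx]) (by simp [hr t ht])
  have := hs.eq_deriv s (hf.inner ℝ hf) hconst
  rw [real_inner_comm (f t) f'] at this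
  linarith

def unitNormal (c : ℝ → E3) (t : ℝ) : E3 :=
  ‖deriv (deriv c) t‖⁻¹ • deriv (deriv c) t

lemma norm_unitNormal {c : ℝ → E3} {t : ℝ} (h : deriv (deriv c) t ≠ 0) :
    ‖unitNormal c t‖ = 1 :=
  norm_smul_inv_norm h

lemma differentiableAt_unitNormal {c : ℝ → E3} {t : ℝ}
    (hc : DifferentiableAt ℝ (deriv (deriv c)) t) (h : deriv (deriv c) t ≠ 0) :
    DifferentiableAt ℝ (unitNormal c) t :=
  ((hc.norm ℝ h).inv (norm_ne_zero_iff.mpr h)).smul hc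

lemma hasDerivAt_deriv_eq_smul_unitNormal {c : ℝ → E3} {t : ℝ}
    (hc : DifferentiableAt ℝ (deriv c) t) (h : deriv (deriv c) t ≠ 0) :
    HasDerivAt (deriv c) (‖deriv (deriv c) t‖ • unitNormal c t) t := by
  rw [unitNormal, smul_smul, mul_inv_cancel₀ (norm_ne_zero_iff.mpr h), one_smul]
  exact hc.hasDerivAt

lemma inner_cross3_ruling_unitNormal_deriv {a b t : ℝ} (hab : a < b) (ht : t ∈ Icc a b)
    {c : ℝ → E3} {α β : ℝ → ℝ} (harc : ∀ s ∈ Icc a b, ‖deriv c s‖ = 1)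
    (hc'' : ∀ s ∈ Icc a b, deriv (deriv c) s ≠ 0)
    (hc't : DifferentiableAt ℝ (deriv c) t) (hc''t : DifferentiableAt ℝ (deriv (deriv c)) t)
    (hα : DifferentiableAt ℝ α t) (hβ : DifferentiableAt ℝ β t) :
    ⟪cross3 (deriv c t) (ruling (α t) (β t) (deriv c t) (unitNormal c t)),
        deriv (fun s => ruling (α s) (β s) (deriv c s) (unitNormal c s)) t⟫ =
      sin (β t) * ((deriv α t + ⟪deriv (unitNormal c) t, cross3 (deriv c t) (unitNormal c t)⟫) *
        sin (β t) - ‖deriv (deriv c) t‖ * sin (α t) * cos (β t)) := by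
  have hUD : UniqueDiffWithinAt ℝ (Icc a b) t := uniqueDiffOn_Icc hab t ht
  have hc'_deriv := hasDerivAt_deriv_eq_smul_unitNormal hc't (hc'' t ht)
  have hn_deriv := (differentiableAt_unitNormal hc''t (hc'' t ht)).hasDerivAt
  have hn_norm : ∀ s ∈ Icc a b, ‖unitNormal c s‖ = 1 := fun s hs => norm_unitNormal (hc'' s hs)
  have hcn : ⟪deriv c t, unitNormal c t⟫ = 0 := by
    have := hc'_deriv.hasDerivWithinAt.inner_eq_zero_of_norm_eqOn hUD ht harc
    rwa [inner_smul_right, mul_eq_zero, or_iff_right (norm_ne_zero_iff.mpr (hc'' t ht))] at this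
  exact inner_cross3_ruling_deriv hα hβ hc'_deriv hn_deriv (harc t ht) hcn (hn_norm t ht)
    (hn_deriv.hasDerivWithinAt.inner_eq_zero_of_norm_eqOn hUD ht hn_norm)

theorem stmt0_general (a b : ℝ) (hab : a < b)
    (c : ℝ → E3) (hc : ContDiff ℝ ∞ c)
    (harc : ∀ t ∈ Icc a b, ‖deriv c t‖ = 1)
    (κ : ℝ → ℝ) (hκ : ∀ t, κ t = ‖deriv (deriv c) t‖)
    (hκpos : ∀ t ∈ Icc a b, 0 < κ t)
    (e n bi : ℝ → E3) (τ : ℝ → ℝ)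
    (he : ∀ t, e t = deriv c t)
    (hn : ∀ t, n t = (κ t)⁻¹ • deriv (deriv c) t)
    (hbi : ∀ t, bi t = cross3 (e t) (n t))
    (hτ : ∀ t, τ t = ⟪deriv n t, bi t⟫)
    (α β : ℝ → ℝ) (hα : ContDiff ℝ ∞ α) (hβ : ContDiff ℝ ∞ β)
    (hβ1 : ∀ t ∈ Icc a b, 0 < β t ∧ β t < π)
    (ξ : ℝ → E3)
    (hξ : ∀ t, ξ t = cos (β t) • e t +
      sin (β t) • (cos (α t) • n t + sin (α t) • bi t)) :
    (∀ t ∈ Icc a b, ⟪cross3 (deriv c t) (ξ t), deriv ξ t⟫ = 0) ↔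
      (∀ t ∈ Icc a b,
        κ t * sin (α t) * cos (β t) = (deriv α t + τ t) * sin (β t)) := by
  obtain rfl : e = deriv c := funext he
  obtain rfl : κ = fun t => ‖deriv (deriv c) t‖ := funext hκ
  obtain rfl : n = unitNormal c := funext hn
  obtain rfl : ξ = fun t => ruling (α t) (β t) (deriv c t) (unitNormal c t) :=
    funext fun t => by rw [hξ, hbi]; rfl
  have hc' : ContDiff ℝ ∞ (deriv c) := (contDiff_infty_iff_deriv.mp hc).2
  have hc'' : ContDiff ℝ ∞ (deriv (deriv c)) := (contDiff_infty_iff_deriv.mp hc').2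
  refine forall₂_congr fun t ht => ?_
  have hsinβ : sin (β t) ≠ 0 := (sin_pos_of_pos_of_lt_pi (hβ1 t ht).1 (hβ1 t ht).2).ne'
  rw [inner_cross3_ruling_unitNormal_deriv hab ht harc
    (fun s hs => norm_pos_iff.mp (hκpos s hs))
    (hc'.differentiable (by simp) t) (hc''.differentiable (by simp) t)
    (hα.differentiable (by simp) t) (hβ.differentiable (by simp) t), hτ, hbi,
    mul_eq_zero, or_iff_right hsinβ, sub_eq_zero, eq_comm]

/-- the ruled strip `f(t,v) = c(t) + v ξ(t)` is developable
(`det(c', ξ, ξ') = 0` on `I`, expressed via the triple product) iff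
`κ sin α cos β = (α' + τ) sin β` on `I`. -/
theorem stmt0 (a b : ℝ) (hab : a < b)
    (c : ℝ → E3) (hc : ContDiff ℝ ∞ c) (hinj : InjOn c (Icc a b))
    (harc : ∀ t ∈ Icc a b, ‖deriv c t‖ = 1)
    (κ : ℝ → ℝ) (hκ : ∀ t, κ t = ‖deriv (deriv c) t‖)
    (hκpos : ∀ t ∈ Icc a b, 0 < κ t)
    (e n bi : ℝ → E3) (τ : ℝ → ℝ)
    (he : ∀ t, e t = deriv c t)
    (hn : ∀ t, n t = (κ t)⁻¹ • deriv (deriv c) t)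
    (hbi : ∀ t, bi t = cross3 (e t) (n t))
    (hτ : ∀ t, τ t = ⟪deriv n t, bi t⟫)
    (α β : ℝ → ℝ) (hα : ContDiff ℝ ∞ α) (hβ : ContDiff ℝ ∞ β)
    (hα1 : ∀ t ∈ Icc a b, 0 < |α t| ∧ |α t| < π / 2)
    (hβ1 : ∀ t ∈ Icc a b, 0 < β t ∧ β t < π)
    (ξ : ℝ → E3)
    (hξ : ∀ t, ξ t = cos (β t) • e t +
      sin (β t) • (cos (α t) • n t + sin (α t) • bi t)) :
    (∀ t ∈ Icc a b, ⟪cross3 (deriv c t) (ξ t), deriv ξ t⟫ = 0) ↔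
      (∀ t ∈ Icc a b,
        κ t * sin (α t) * cos (β t) = (deriv α t + τ t) * sin (β t)) :=
  stmt0_general a b hab c hc harc κ hκ hκpos e n bi τ he hn hbi hτ α β hα hβ hβ1 ξ hξ
end
end

section
/- Let c₁(t) := (cos t, sin t, 0) for t ∈ [−π/6, π/6] (a unit-speed circular arc with curvature 1 and torsion 0), let α : [−π/6, π/6] → (0, π/2) be smooth, and let β : [−π/6, π/6] → (0, π) be determined by cot β = α'/sin α. Let f^α(t,v) := c₁(t) + v(cos β(t) e(t) + sin β(t)(cos α(t) n(t) + sin α(t) b(t))) and f^{−α}(t,v) := c₁(t) + v(cos β(t) e(t) + sin β(t)(cos α(t) n(t) − sin α(t) b(t))), where e := c₁', n := c₁''/|c₁''|, b := e × n. Then f^{−α} = S ∘ f^α, where S is the isometry S(x,y,z) := (x, y, −z); in particular the strip f^{−α} is congruent to f^α. -/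
/-!
The arc `c₁` lies in the plane `z = 0`, so the reflection `S` fixes `c₁` and, being linear,
also its derivatives, hence the tangent `e` and the principal normal `n`. As `S` reverses
orientation, `S (u × v) = -(S u × S v)`, so `S b = -b`. Applying the linear map `S` to
`f^α(t, v)` therefore only flips the sign in front of `b`, which gives `f^{-α}(t, v)`.
-/

noncomputable section
open Real Set
open scoped ContDiff

local notation "⟪" x ", " y "⟫" => @inner ℝ _ _ x y

/-- The circular arc `c₁(t) = (cos t, sin t, 0)`. -/
def c₁ : ℝ → E3 := fun t =>
  (WithLp.equiv 2 (Fin 3 → ℝ)).symm ![cos t, sin t, 0]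

/-- Unit tangent of a unit-speed curve. -/
def tang (γ : ℝ → E3) : ℝ → E3 := fun t => deriv γ t

/-- Curvature `κ = |γ''|` of a unit-speed curve. -/
def curv (γ : ℝ → E3) : ℝ → ℝ := fun t => ‖deriv (deriv γ) t‖

/-- Unit principal normal `n = γ''/κ` of a unit-speed curve. -/
def pnorm (γ : ℝ → E3) : ℝ → E3 := fun t => (curv γ t)⁻¹ • deriv (deriv γ) t

/-- Unit binormal `b = e × n` of a unit-speed curve. -/
def binorm (γ : ℝ → E3) : ℝ → E3 := fun t => cross3 (tang γ t) (pnorm γ t)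

/-- The reflection `S(x,y,z) = (x, y, -z)`. -/
def S₃ : E3 → E3 := fun x =>
  (WithLp.equiv 2 (Fin 3 → ℝ)).symm ![x 0, x 1, -x 2]

theorem S₃_involutive : Function.Involutive S₃ := fun x => by
  ext i; fin_cases i <;> simp [S₃]

def S₃L : E3 ≃ₗᵢ[ℝ] E3 :=
  LinearEquiv.isometryOfInner
    (LinearEquiv.ofInvolutive
      { toFun := S₃
        map_add' := fun x y => by ext i; fin_cases i <;> simp [S₃]; ring
        map_smul' := fun c x => by ext i; fin_cases i <;> simp [S₃] }
      S₃_involutive)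
    fun x y => by simp [S₃, Fin.sum_univ_three, PiLp.inner_apply]

@[simp]
theorem coe_S₃L : ⇑S₃L = S₃ := rfl

theorem isometry_S₃ : Isometry S₃ := S₃L.isometry

theorem S₃_cross3 (u v : E3) : S₃ (cross3 u v) = -cross3 (S₃ u) (S₃ v) := by
  ext i; fin_cases i <;> simp [S₃, cross3] <;> ring

theorem deriv_S₃_comp (f : ℝ → E3) (t : ℝ) : deriv (S₃ ∘ f) t = S₃ (deriv f t) := by
  rw [← coe_S₃L, ← fderiv_apply_one_eq_deriv, LinearIsometryEquiv.comp_fderiv,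
    ← fderiv_apply_one_eq_deriv]
  rfl

section PlanarCurve

variable {γ : ℝ → E3}

theorem S₃_deriv_of_forall_S₃_eq (hγ : ∀ t, S₃ (γ t) = γ t) (t : ℝ) :
    S₃ (deriv γ t) = deriv γ t := by
  rw [← deriv_S₃_comp, show S₃ ∘ γ = γ from funext hγ]

theorem S₃_tang (hγ : ∀ t, S₃ (γ t) = γ t) (t : ℝ) : S₃ (tang γ t) = tang γ t :=
  S₃_deriv_of_forall_S₃_eq hγ t

theorem S₃_pnorm (hγ : ∀ t, S₃ (γ t) = γ t) (t : ℝ) : S₃ (pnorm γ t) = pnorm γ t := by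
  rw [pnorm, ← coe_S₃L, map_smul, coe_S₃L,
    S₃_deriv_of_forall_S₃_eq (S₃_deriv_of_forall_S₃_eq hγ)]

theorem S₃_binorm (hγ : ∀ t, S₃ (γ t) = γ t) (t : ℝ) : S₃ (binorm γ t) = -binorm γ t := by
  rw [binorm, S₃_cross3, S₃_tang hγ, S₃_pnorm hγ]

end PlanarCurve

theorem S₃_c₁ (t : ℝ) : S₃ (c₁ t) = c₁ t := by
  ext i; fin_cases i <;> simp [S₃, c₁]

theorem stmt15_general (α : ℝ → ℝ) (β : ℝ → ℝ) (fp fm : ℝ → ℝ → E3)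
    (hfp : ∀ t v, fp t v = c₁ t + v • (cos (β t) • tang c₁ t +
      sin (β t) • (cos (α t) • pnorm c₁ t + sin (α t) • binorm c₁ t)))
    (hfm : ∀ t v, fm t v = c₁ t + v • (cos (β t) • tang c₁ t +
      sin (β t) • (cos (α t) • pnorm c₁ t - sin (α t) • binorm c₁ t))) :
    Isometry S₃ ∧
    ∀ t ∈ Icc (-(π/6)) (π/6), ∀ v : ℝ, fm t v = S₃ (fp t v) := by
  refine ⟨isometry_S₃, fun t _ v => ?_⟩
  rw [hfm, hfp, ← coe_S₃L]
  simp only [map_add, map_smul, coe_S₃L, S₃_c₁, S₃_tang S₃_c₁, S₃_pnorm S₃_c₁,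
    S₃_binorm S₃_c₁, smul_neg, sub_eq_add_neg]

/-- along the planar circular arc `c₁` on `[-π/6, π/6]`, the
dual strip `f^{-α}` is the image of `f^α` under the isometry
`S(x,y,z) = (x,y,-z)`: `f^{-α} = S ∘ f^α`; in particular `f^{-α}` is
congruent to `f^α`. -/
theorem stmt15 (α : ℝ → ℝ) (hα : ContDiff ℝ ∞ α)
    (hα1 : ∀ t ∈ Icc (-(π/6)) (π/6), α t ∈ Ioo 0 (π/2))
    -- `β : [-π/6, π/6] → (0, π)` is determined by `cot β = α'/sin α`:
    (β : ℝ → ℝ)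
    (hβ : ∀ t ∈ Icc (-(π/6)) (π/6), 0 < β t ∧ β t < π ∧
      cos (β t) * sin (α t) = deriv α t * sin (β t))
    (fp fm : ℝ → ℝ → E3)
    (hfp : ∀ t v, fp t v = c₁ t + v • (cos (β t) • tang c₁ t +
      sin (β t) • (cos (α t) • pnorm c₁ t + sin (α t) • binorm c₁ t)))
    (hfm : ∀ t v, fm t v = c₁ t + v • (cos (β t) • tang c₁ t +
      sin (β t) • (cos (α t) • pnorm c₁ t - sin (α t) • binorm c₁ t))) :
    Isometry S₃ ∧
    ∀ t ∈ Icc (-(π/6)) (π/6), ∀ v : ℝ, fm t v = S₃ (fp t v) :=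
  stmt15_general α β fp fm hfp hfm
end
end
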